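/- Fix full-support distributions P_1,…,P_{M1}, Q_1,…,Q_{M2} on a finite alphabet X, positive reals α, β, and a nonempty set S ⊆ [M1]×[M2] of pairs with distinct first coordinates and distinct second coordinates. Then the constrained minimum over tuples (Ω_1,…,Ω_{M1}, Ψ_1,…,Ψ_{M2}) of probability distributions satisfying Ω_i = Ψ_j for all (i,j) ∈ S of Σ_i α D(Ω_i‖P_i) + Σ_j β D(Ψ_j‖Q_j) equals Σ_{(i,j) ∈ S} min over a single distribution V of (α D(V‖P_i) + β D(V‖Q_j)), which equals Σ_{(i,j)∈S} α D_{β/(α+β)}(Q_j‖P_i). -/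

import Mathlib

/-!
With `λ = β / (α + β)` and `G ∝ Q ^ λ * P ^ (1 - λ)` the normalized geometric mixture, one has for
every distribution `V` the identity `α D(V‖P) + β D(V‖Q) = (α + β) D(V‖G) + α D_λ(Q‖P)`. By Gibbs'
inequality the single-pair minimum is therefore `α D_λ(Q‖P)`, attained at `V = G`. In the coupled
problem each matched pair `(i, j) ∈ S` contributes at least this amount, and every other term is a
nonnegative divergence; since `S` is a matching, setting `Ω_i = Ψ_j = G` on matched pairs and
`Ω_i = P_i`, `Ψ_j = Q_j` elsewhere attains the sum of the pair minima.
-/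
open scoped BigOperators

/-- Kullback–Leibler divergence between pmfs on a finite alphabet
(convention `0 log 0 = 0`). -/
noncomputable def klDiv {X : Type*} [Fintype X] (P Q : X → ℝ) : ℝ :=
  ∑ x, P x * Real.log (P x / Q x)

/-- Rényi divergence of order `lam ∈ (0,1)` between pmfs on a finite alphabet. -/
noncomputable def renyiDiv {X : Type*} [Fintype X] (lam : ℝ) (P Q : X → ℝ) : ℝ :=
  (1 / (lam - 1)) * Real.log (∑ x, P x ^ lam * Q x ^ (1 - lam))



open Real Finset

section Divergences

variable {X : Type*} [Fintype X]

lemma klDiv_self (P : X → ℝ) : klDiv P P = 0 :=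
  sum_eq_zero fun x _ => by by_cases h : P x = 0 <;> simp [h]

lemma klDiv_nonneg {V W : X → ℝ} (hV0 : ∀ x, 0 ≤ V x) (hV1 : ∑ x, V x = 1)
    (hW0 : ∀ x, 0 < W x) (hW1 : ∑ x, W x = 1) : 0 ≤ klDiv V W := by
  have key (x : X) : V x - W x ≤ V x * log (V x / W x) := by
    have hW := (hW0 x).ne'
    have hklFun : V x * log (V x / W x) - (V x - W x)
        = W x * InformationTheory.klFun (V x / W x) := by
      unfold InformationTheory.klFun; field_simp; ring
    linarith [mul_nonneg (hW0 x).le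
      (InformationTheory.klFun_nonneg (div_nonneg (hV0 x) (hW0 x).le))]
  calc (0 : ℝ) = ∑ x, (V x - W x) := by rw [sum_sub_distrib, hV1, hW1, sub_self]
    _ ≤ klDiv V W := sum_le_sum fun x _ => key x

noncomputable def geometricMixture (lam : ℝ) (Q P : X → ℝ) (x : X) : ℝ :=
  Q x ^ lam * P x ^ (1 - lam) / ∑ y, Q y ^ lam * P y ^ (1 - lam)

variable [Nonempty X] {P Q : X → ℝ} (hP : ∀ x, 0 < P x) (hQ : ∀ x, 0 < Q x) (lam : ℝ)
include hP hQ

lemma sum_rpow_mul_rpow_pos : 0 < ∑ y, Q y ^ lam * P y ^ (1 - lam) :=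
  sum_pos (fun y _ => by have := hP y; have := hQ y; positivity) univ_nonempty

lemma geometricMixture_pos (x : X) : 0 < geometricMixture lam Q P x := by
  have := hP x; have := hQ x; have := sum_rpow_mul_rpow_pos hP hQ lam
  unfold geometricMixture
  positivity

lemma sum_geometricMixture : ∑ x, geometricMixture lam Q P x = 1 := by
  simp only [geometricMixture, ← sum_div, div_self (sum_rpow_mul_rpow_pos hP hQ lam).ne']

/-- Termwise, `α log (V/P) + β log (V/Q) = (α + β) log (V/G) - (α + β) log Z` for the geometric
mixture `G` of order `β / (α + β)` with normalizer `Z`; summing against `V` turns the last term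
into the Rényi term. -/
lemma mul_klDiv_add_mul_klDiv {V : X → ℝ} (hV1 : ∑ x, V x = 1) {α β : ℝ} (hα : α ≠ 0)
    (hαβ : α + β ≠ 0) :
    α * klDiv V P + β * klDiv V Q
      = (α + β) * klDiv V (geometricMixture (β / (α + β)) Q P)
        + α * renyiDiv (β / (α + β)) Q P := by
  set lam := β / (α + β) with hlam
  have hlam1 : lam - 1 = -α / (α + β) := by rw [hlam]; field_simp; ring
  set Z := ∑ y, Q y ^ lam * P y ^ (1 - lam) with hZ_def
  have hZ : 0 < Z := sum_rpow_mul_rpow_pos hP hQ lam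
  have hrenyi : α * renyiDiv lam Q P = ∑ x, V x * (-(α + β) * log Z) := by
    rw [← sum_mul, hV1, renyiDiv, ← hZ_def, hlam1]
    field_simp
  simp only [hrenyi, klDiv, mul_sum, ← sum_add_distrib]
  refine sum_congr rfl fun x _ => ?_
  rcases eq_or_ne (V x) 0 with hV | hV
  · simp [hV]
  have hlogG : log (geometricMixture lam Q P x)
      = lam * log (Q x) + (1 - lam) * log (P x) - log Z := by
    rw [geometricMixture, ← hZ_def, log_div (by have := hP x; have := hQ x; positivity) hZ.ne',
      log_mul (rpow_pos_of_pos (hQ x) _).ne' (rpow_pos_of_pos (hP x) _).ne',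
      log_rpow (hQ x), log_rpow (hP x)]
  rw [log_div hV (hP x).ne', log_div hV (hQ x).ne',
    log_div hV (geometricMixture_pos hP hQ lam x).ne', hlogG, hlam]
  field_simp
  ring

lemma mul_klDiv_geometricMixture_add_mul_klDiv {α β : ℝ} (hα : α ≠ 0) (hαβ : α + β ≠ 0) :
    α * klDiv (geometricMixture (β / (α + β)) Q P) P
      + β * klDiv (geometricMixture (β / (α + β)) Q P) Q = α * renyiDiv (β / (α + β)) Q P := by
  rw [mul_klDiv_add_mul_klDiv hP hQ (sum_geometricMixture hP hQ _) hα hαβ, klDiv_self, mul_zero,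
    zero_add]

lemma isLeast_mul_klDiv_add_mul_klDiv {α β : ℝ} (hα : 0 < α) (hβ : 0 < β) :
    IsLeast {r : ℝ | ∃ V : X → ℝ, (∀ x, 0 ≤ V x) ∧ (∑ x, V x = 1) ∧
        r = α * klDiv V P + β * klDiv V Q} (α * renyiDiv (β / (α + β)) Q P) := by
  have hαβ : α + β ≠ 0 := by positivity
  have hG0 := geometricMixture_pos hP hQ (β / (α + β))
  have hG1 := sum_geometricMixture hP hQ (β / (α + β))
  refine ⟨⟨_, fun x => (hG0 x).le, hG1,
    (mul_klDiv_geometricMixture_add_mul_klDiv hP hQ hα.ne' hαβ).symm⟩, ?_⟩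
  rintro r ⟨V, hV0, hV1, rfl⟩
  rw [mul_klDiv_add_mul_klDiv hP hQ hV1 hα.ne' hαβ, le_add_iff_nonneg_left]
  exact mul_nonneg (by positivity) (klDiv_nonneg hV0 hV1 hG0 hG1)

end Divergences

section Matching

open Function

variable {ι κ γ M : Type*}

lemma forall_extend_of_forall {f : ι → κ} {g : ι → γ} {e : κ → γ} {p : γ → Prop}
    (hg : ∀ i, p (g i)) (he : ∀ k, p (e k)) (k : κ) : p (extend f g e k) := by
  rcases Set.range_extend_subset f g e ⟨k, rfl⟩ with ⟨i, hi⟩ | ⟨k', -, hk'⟩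
  · exact hi ▸ hg i
  · exact hk' ▸ he k'

variable [Fintype κ] [AddCommMonoid M]

lemma sum_extend_of_injective [Fintype ι] {f : ι → κ} (hf : Injective f) (g : ι → γ) (e : κ → γ)
    {F : κ → γ → M} (hF : ∀ k, F k (e k) = 0) :
    ∑ k, F k (extend f g e k) = ∑ i, F (f i) (g i) := by
  classical
  rw [← sum_subset (subset_univ (univ.image f)) fun k _ hk => ?_, sum_image hf.injOn]
  · simp only [hf.extend_apply]
  · rw [extend_apply' _ _ _ (by simpa using hk), hF]

lemma sum_comp_le_sum_of_injOn [PartialOrder M] [IsOrderedAddMonoid M] {s : Finset ι}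
    {f : ι → κ} (hf : Set.InjOn f s) {g : κ → M} (hg : ∀ k, 0 ≤ g k) :
    ∑ i ∈ s, g (f i) ≤ ∑ k, g k := by
  classical
  rw [← sum_image hf]
  exact sum_le_univ_sum_of_nonneg hg

end Matching

section Coupled

variable {X : Type*} [Fintype X] [Nonempty X] {M1 M2 : ℕ}
    {P : Fin M1 → X → ℝ} {Q : Fin M2 → X → ℝ} (hP0 : ∀ i x, 0 < P i x) (hQ0 : ∀ j x, 0 < Q j x)
    {α β : ℝ} (hα : 0 < α) (hβ : 0 < β) {S : Finset (Fin M1 × Fin M2)}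
    (hS1 : Set.InjOn Prod.fst (S : Set (Fin M1 × Fin M2)))
    (hS2 : Set.InjOn Prod.snd (S : Set (Fin M1 × Fin M2)))
include hP0 hQ0 hα hβ hS1 hS2

open Function

lemma sum_mul_renyiDiv_le (hP1 : ∀ i, ∑ x, P i x = 1) (hQ1 : ∀ j, ∑ x, Q j x = 1)
    {Om : Fin M1 → X → ℝ} {Ps : Fin M2 → X → ℝ}
    (hOm0 : ∀ i x, 0 ≤ Om i x) (hOm1 : ∀ i, ∑ x, Om i x = 1)
    (hPs0 : ∀ j x, 0 ≤ Ps j x) (hPs1 : ∀ j, ∑ x, Ps j x = 1) (hS : ∀ p ∈ S, Om p.1 = Ps p.2) :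
    ∑ p ∈ S, α * renyiDiv (β / (α + β)) (Q p.2) (P p.1)
      ≤ (∑ i, α * klDiv (Om i) (P i)) + ∑ j, β * klDiv (Ps j) (Q j) :=
  calc ∑ p ∈ S, α * renyiDiv (β / (α + β)) (Q p.2) (P p.1)
      ≤ ∑ p ∈ S, (α * klDiv (Om p.1) (P p.1) + β * klDiv (Ps p.2) (Q p.2)) :=
        sum_le_sum fun p hp => (isLeast_mul_klDiv_add_mul_klDiv (hP0 p.1) (hQ0 p.2) hα hβ).2
          ⟨Om p.1, hOm0 p.1, hOm1 p.1, by rw [hS p hp]⟩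
    _ ≤ _ := by
      rw [sum_add_distrib]
      gcongr
      · exact sum_comp_le_sum_of_injOn hS1 fun i =>
          mul_nonneg hα.le (klDiv_nonneg (hOm0 i) (hOm1 i) (hP0 i) (hP1 i))
      · exact sum_comp_le_sum_of_injOn hS2 fun j =>
          mul_nonneg hβ.le (klDiv_nonneg (hPs0 j) (hPs1 j) (hQ0 j) (hQ1 j))

lemma exists_coupled_eq_sum_mul_renyiDiv (hP1 : ∀ i, ∑ x, P i x = 1) (hQ1 : ∀ j, ∑ x, Q j x = 1) :
    ∃ (Om : Fin M1 → X → ℝ) (Ps : Fin M2 → X → ℝ),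
      (∀ i x, 0 ≤ Om i x) ∧ (∀ i, ∑ x, Om i x = 1) ∧
      (∀ j x, 0 ≤ Ps j x) ∧ (∀ j, ∑ x, Ps j x = 1) ∧
      (∀ p ∈ S, Om p.1 = Ps p.2) ∧
      ∑ p ∈ S, α * renyiDiv (β / (α + β)) (Q p.2) (P p.1)
        = (∑ i, α * klDiv (Om i) (P i)) + ∑ j, β * klDiv (Ps j) (Q j) := by
  have hαβ : α + β ≠ 0 := by positivity
  let G (p : S) : X → ℝ := geometricMixture (β / (α + β)) (Q p.1.2) (P p.1.1)
  have hG0 (p : S) := geometricMixture_pos (hP0 p.1.1) (hQ0 p.1.2) (β / (α + β))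
  have hG1 (p : S) := sum_geometricMixture (hP0 p.1.1) (hQ0 p.1.2) (β / (α + β))
  have hfst : Injective fun p : S => p.1.1 := fun p q h => Subtype.ext (hS1 p.2 q.2 h)
  have hsnd : Injective fun p : S => p.1.2 := fun p q h => Subtype.ext (hS2 p.2 q.2 h)
  refine ⟨extend (fun p : S => p.1.1) G P, extend (fun p : S => p.1.2) G Q,
    forall_extend_of_forall (p := fun V : X → ℝ => ∀ x, 0 ≤ V x)
      (fun p x => (hG0 p x).le) fun i x => (hP0 i x).le,
    forall_extend_of_forall (p := fun V : X → ℝ => ∑ x, V x = 1) hG1 hP1,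
    forall_extend_of_forall (p := fun V : X → ℝ => ∀ x, 0 ≤ V x)
      (fun p x => (hG0 p x).le) fun j x => (hQ0 j x).le,
    forall_extend_of_forall (p := fun V : X → ℝ => ∑ x, V x = 1) hG1 hQ1,
    fun p hp => (hfst.extend_apply G P ⟨p, hp⟩).trans (hsnd.extend_apply G Q ⟨p, hp⟩).symm, ?_⟩
  rw [sum_extend_of_injective hfst G P (F := fun i V => α * klDiv V (P i)) fun i => by
      rw [klDiv_self, mul_zero],
    sum_extend_of_injective hsnd G Q (F := fun j V => β * klDiv V (Q j)) fun j => by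
      rw [klDiv_self, mul_zero], ← sum_add_distrib, ← sum_coe_sort S]
  exact sum_congr rfl fun p _ =>
    (mul_klDiv_geometricMixture_add_mul_klDiv (hP0 p.1.1) (hQ0 p.1.2) hα.ne' hαβ).symm

lemma isLeast_coupled_sum_mul_klDiv (hP1 : ∀ i, ∑ x, P i x = 1) (hQ1 : ∀ j, ∑ x, Q j x = 1) :
    IsLeast {r : ℝ | ∃ (Om : Fin M1 → X → ℝ) (Ps : Fin M2 → X → ℝ),
        (∀ i x, 0 ≤ Om i x) ∧ (∀ i, ∑ x, Om i x = 1) ∧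
        (∀ j x, 0 ≤ Ps j x) ∧ (∀ j, ∑ x, Ps j x = 1) ∧
        (∀ p ∈ S, Om p.1 = Ps p.2) ∧
        r = (∑ i, α * klDiv (Om i) (P i)) + ∑ j, β * klDiv (Ps j) (Q j)}
      (∑ p ∈ S, α * renyiDiv (β / (α + β)) (Q p.2) (P p.1)) := by
  refine ⟨exists_coupled_eq_sum_mul_renyiDiv hP0 hQ0 hα hβ hS1 hS2 hP1 hQ1, ?_⟩
  rintro r ⟨Om, Ps, hOm0, hOm1, hPs0, hPs1, hS, rfl⟩
  exact sum_mul_renyiDiv_le hP0 hQ0 hα hβ hS1 hS2 hP1 hQ1 hOm0 hOm1 hPs0 hPs1 hS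

end Coupled

theorem stmt18_general {X : Type*} [Fintype X] [Nonempty X] (M1 M2 : ℕ)
    (P : Fin M1 → X → ℝ) (Q : Fin M2 → X → ℝ)
    (hP0 : ∀ i x, 0 < P i x) (hP1 : ∀ i, ∑ x, P i x = 1)
    (hQ0 : ∀ j x, 0 < Q j x) (hQ1 : ∀ j, ∑ x, Q j x = 1)
    (α β : ℝ) (hα : 0 < α) (hβ : 0 < β)
    (S : Finset (Fin M1 × Fin M2))
    (hS1 : ∀ p ∈ S, ∀ q ∈ S, p.1 = q.1 → p = q)
    (hS2 : ∀ p ∈ S, ∀ q ∈ S, p.2 = q.2 → p = q) :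
    sInf {r : ℝ | ∃ (Om : Fin M1 → X → ℝ) (Ps : Fin M2 → X → ℝ),
          (∀ i x, 0 ≤ Om i x) ∧ (∀ i, ∑ x, Om i x = 1) ∧
          (∀ j x, 0 ≤ Ps j x) ∧ (∀ j, ∑ x, Ps j x = 1) ∧
          (∀ p ∈ S, Om p.1 = Ps p.2) ∧
          r = (∑ i, α * klDiv (Om i) (P i)) + ∑ j, β * klDiv (Ps j) (Q j)}
        = ∑ p ∈ S, sInf {r : ℝ | ∃ V : X → ℝ, (∀ x, 0 ≤ V x) ∧ (∑ x, V x = 1) ∧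
            r = α * klDiv V (P p.1) + β * klDiv V (Q p.2)} ∧
      (∑ p ∈ S, sInf {r : ℝ | ∃ V : X → ℝ, (∀ x, 0 ≤ V x) ∧ (∑ x, V x = 1) ∧
            r = α * klDiv V (P p.1) + β * klDiv V (Q p.2)})
        = ∑ p ∈ S, α * renyiDiv (β / (α + β)) (Q p.2) (P p.1) := by
  have hpairs : (∑ p ∈ S, sInf {r : ℝ | ∃ V : X → ℝ, (∀ x, 0 ≤ V x) ∧ (∑ x, V x = 1) ∧
      r = α * klDiv V (P p.1) + β * klDiv V (Q p.2)})
        = ∑ p ∈ S, α * renyiDiv (β / (α + β)) (Q p.2) (P p.1) :=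
    sum_congr rfl fun p _ => (isLeast_mul_klDiv_add_mul_klDiv (hP0 p.1) (hQ0 p.2) hα hβ).csInf_eq
  rw [hpairs]
  exact ⟨(isLeast_coupled_sum_mul_klDiv hP0 hQ0 hα hβ hS1 hS2 hP1 hQ1).csInf_eq, rfl⟩

theorem stmt18 {X : Type*} [Fintype X] [Nonempty X] (M1 M2 : ℕ)
    (P : Fin M1 → X → ℝ) (Q : Fin M2 → X → ℝ)
    (hP0 : ∀ i x, 0 < P i x) (hP1 : ∀ i, ∑ x, P i x = 1)
    (hQ0 : ∀ j x, 0 < Q j x) (hQ1 : ∀ j, ∑ x, Q j x = 1)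
    (α β : ℝ) (hα : 0 < α) (hβ : 0 < β)
    (S : Finset (Fin M1 × Fin M2)) (hSne : S.Nonempty)
    (hS1 : ∀ p ∈ S, ∀ q ∈ S, p.1 = q.1 → p = q)
    (hS2 : ∀ p ∈ S, ∀ q ∈ S, p.2 = q.2 → p = q) :
    sInf {r : ℝ | ∃ (Om : Fin M1 → X → ℝ) (Ps : Fin M2 → X → ℝ),
          (∀ i x, 0 ≤ Om i x) ∧ (∀ i, ∑ x, Om i x = 1) ∧
          (∀ j x, 0 ≤ Ps j x) ∧ (∀ j, ∑ x, Ps j x = 1) ∧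
          (∀ p ∈ S, Om p.1 = Ps p.2) ∧
          r = (∑ i, α * klDiv (Om i) (P i)) + ∑ j, β * klDiv (Ps j) (Q j)}
        = ∑ p ∈ S, sInf {r : ℝ | ∃ V : X → ℝ, (∀ x, 0 ≤ V x) ∧ (∑ x, V x = 1) ∧
            r = α * klDiv V (P p.1) + β * klDiv V (Q p.2)} ∧
      (∑ p ∈ S, sInf {r : ℝ | ∃ V : X → ℝ, (∀ x, 0 ≤ V x) ∧ (∑ x, V x = 1) ∧
            r = α * klDiv V (P p.1) + β * klDiv V (Q p.2)})
        = ∑ p ∈ S, α * renyiDiv (β / (α + β)) (Q p.2) (P p.1) :=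
  stmt18_general M1 M2 P Q hP0 hP1 hQ0 hQ1 α β hα hβ S hS1 hS2
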